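/- For every X ∈ [0,∞)², the determinant of the Hessian of Φ_n satisfies 2·det(D²Φ_n(X)) ≥ (n−1)·A_{n−2,n−2}·X₁^{2n−4} + (n−1)·A_{0,0}·X₂^{2n−4}, where A_{0,0} > 0 and A_{n−2,n−2} > 0. -/

import Mathlib

/-- The coefficient `a_{j,n}` of the polynomial `Φ_n`. -/
noncomputable def ajn (a b c d : ℝ) (n j : ℕ) : ℝ :=
  (n.choose j : ℝ) * ∏ k ∈ Finset.range j,
    (a * k + c * ((n : ℝ) - k - 1)) / (b * k + d * ((n : ℝ) - k - 1))

/-- The polynomial `Φ_n`. -/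
noncomputable def Phi (a b c d : ℝ) (n : ℕ) (x y : ℝ) : ℝ :=
  ∑ j ∈ Finset.range (n + 1), ajn a b c d n j * x ^ j * y ^ (n - j)

/-- Partial derivative with respect to the first variable. -/
noncomputable def pd1 (f : ℝ → ℝ → ℝ) (x y : ℝ) : ℝ := deriv (fun t => f t y) x

/-- Partial derivative with respect to the second variable. -/
noncomputable def pd2 (f : ℝ → ℝ → ℝ) (x y : ℝ) : ℝ := deriv (fun t => f x t) y

/-- The Hessian matrix of a function of two real variables. -/
noncomputable def Hess (f : ℝ → ℝ → ℝ) (x y : ℝ) : Matrix (Fin 2) (Fin 2) ℝ :=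
  !![pd1 (pd1 f) x y, pd1 (pd2 f) x y; pd2 (pd1 f) x y, pd2 (pd2 f) x y]

/-- The mobility matrix `M(X)`. -/
noncomputable def Mmat (a b c d x y : ℝ) : Matrix (Fin 2) (Fin 2) ℝ :=
  !![a * x, b * x; c * y, d * y]

/-- The coefficient `A_{j,k}`. -/
noncomputable def Ajk (a b c d : ℝ) (n j k : ℕ) : ℝ :=
  ((j : ℝ) + 2) * ((n : ℝ) - k) * ajn a b c d n (j + 2) * ajn a b c d n k
    - ((n : ℝ) - j - 1) * ((k : ℝ) + 1) * ajn a b c d n (j + 1) * ajn a b c d n (k + 1)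

/-!
Let `n = m + 2` and let `r_j` be the ratios with `(j+1) a_{j+1} = (n-j) r_j a_j`. With
`W_j = (m+2-j)(m+1-j) a_j`, the second derivatives of the binary form `Φ_n` are binary forms of
degree `m` with coefficients `W_j r_j r_{j+1}`, `W_j r_j` and `W_j`. Expanding, with
`ξ_j = x^j y^(m-j)`, `2 det = ∑_{j,k} W_j W_k ξ_j ξ_k (r_j r_{j+1} + r_k r_{k+1} - 2 r_j r_k)`.
The ratios `r_j` are positive and increasing, so every term dominates
`W_j W_k ξ_j ξ_k (r_j - r_k)^2 ≥ 0`, and the diagonal terms `j = 0` and `j = m` are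
`2 (m+1) A_{0,0} y^(2m)` and `2 (m+1) A_{m,m} x^(2m)`.
-/

open Finset

noncomputable def binaryForm (p : ℕ → ℝ) (m : ℕ) (x y : ℝ) : ℝ :=
  ∑ j ∈ range (m + 1), p j * x ^ j * y ^ (m - j)

theorem Phi_eq_binaryForm (a b c d : ℝ) (n : ℕ) : Phi a b c d n = binaryForm (ajn a b c d n) n :=
  rfl

theorem pd1_binaryForm_succ (p : ℕ → ℝ) (m : ℕ) :
    pd1 (binaryForm p (m + 1)) = binaryForm (fun j => ((j : ℝ) + 1) * p (j + 1)) m := by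
  funext x y
  have hsplit : (fun t => binaryForm p (m + 1) t y) = fun t =>
      p 0 * y ^ (m + 1) + ∑ j ∈ range (m + 1), p (j + 1) * y ^ (m - j) * t ^ (j + 1) := by
    funext t
    rw [binaryForm, sum_range_succ']
    simp only [Nat.add_sub_add_right, pow_zero, mul_one, Nat.sub_zero]
    rw [add_comm]
    exact congrArg₂ _ rfl (sum_congr rfl fun j _ => by ring)
  have hderiv : HasDerivAt (fun t => p 0 * y ^ (m + 1) +
      ∑ j ∈ range (m + 1), p (j + 1) * y ^ (m - j) * t ^ (j + 1))
      (∑ j ∈ range (m + 1), p (j + 1) * y ^ (m - j) * (((j + 1 : ℕ) : ℝ) * x ^ j)) x :=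
    (HasDerivAt.fun_sum fun j _ => (hasDerivAt_pow (j + 1) x).const_mul _).const_add _
  rw [pd1, hsplit, hderiv.deriv, binaryForm]
  exact sum_congr rfl fun j _ => by push_cast; ring

theorem pd2_binaryForm_succ (p : ℕ → ℝ) (m : ℕ) :
    pd2 (binaryForm p (m + 1)) = binaryForm (fun j => ((m : ℝ) + 1 - j) * p j) m := by
  funext x y
  have hsplit : (fun t => binaryForm p (m + 1) x t) = fun t =>
      ∑ j ∈ range (m + 1), p j * x ^ j * t ^ (m - j + 1) + p (m + 1) * x ^ (m + 1) := by
    funext t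
    rw [binaryForm, sum_range_succ, Nat.sub_self, pow_zero, mul_one]
    refine congrArg₂ _ (sum_congr rfl fun j hj => ?_) rfl
    rw [Nat.sub_add_comm (Nat.le_of_lt_succ (mem_range.1 hj))]
  have hderiv : HasDerivAt (fun t =>
      ∑ j ∈ range (m + 1), p j * x ^ j * t ^ (m - j + 1) + p (m + 1) * x ^ (m + 1))
      (∑ j ∈ range (m + 1), p j * x ^ j * (((m - j + 1 : ℕ) : ℝ) * y ^ (m - j))) y :=
    (HasDerivAt.fun_sum fun j _ => (hasDerivAt_pow (m - j + 1) y).const_mul _).add_const _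
  rw [pd2, hsplit, hderiv.deriv, binaryForm]
  refine sum_congr rfl fun j hj => ?_
  push_cast [Nat.cast_sub (Nat.le_of_lt_succ (mem_range.1 hj))]
  ring

theorem det_Hess_binaryForm (p : ℕ → ℝ) (m : ℕ) (x y : ℝ) :
    (Hess (binaryForm p (m + 2)) x y).det =
      binaryForm (fun j => ((j : ℝ) + 2) * (j + 1) * p (j + 2)) m x y *
        binaryForm (fun j => ((m : ℝ) + 2 - j) * (m + 1 - j) * p j) m x y -
      binaryForm (fun j => ((j : ℝ) + 1) * (m + 1 - j) * p (j + 1)) m x y ^ 2 := by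
  rw [Hess, Matrix.det_fin_two_of, pd1_binaryForm_succ, pd2_binaryForm_succ, pd1_binaryForm_succ,
    pd2_binaryForm_succ, pd1_binaryForm_succ, pd2_binaryForm_succ, sq]
  congr! 4 with j <;> push_cast <;> ring

theorem sq_mul_mul_sub_le_sum_mul_sum_sub_sq {ι : Type*} {s : Finset ι} {w r r' : ι → ℝ}
    (hw : ∀ j ∈ s, 0 ≤ w j) (hr : ∀ j ∈ s, 0 ≤ r j) (hrr' : ∀ j ∈ s, r j ≤ r' j) {i : ι}
    (hi : i ∈ s) :
    w i ^ 2 * r i * (r' i - r i) ≤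
      (∑ j ∈ s, w j * r j * r' j) * (∑ j ∈ s, w j) - (∑ j ∈ s, w j * r j) ^ 2 := by
  set T : ι → ι → ℝ := fun j k => w j * w k * (r j * r' j + r k * r' k - 2 * (r j * r k))
  have hexpand : 2 * ((∑ j ∈ s, w j * r j * r' j) * (∑ j ∈ s, w j) - (∑ j ∈ s, w j * r j) ^ 2) =
      ∑ j ∈ s, ∑ k ∈ s, T j k := by
    calc _ = (∑ j ∈ s, w j * r j * r' j) * (∑ j ∈ s, w j) +
          (∑ j ∈ s, w j) * (∑ j ∈ s, w j * r j * r' j) -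
          2 * ((∑ j ∈ s, w j * r j) * (∑ j ∈ s, w j * r j)) := by ring
      _ = _ := by
        rw [sum_mul_sum, sum_mul_sum, sum_mul_sum, mul_sum, ← sum_add_distrib, ← sum_sub_distrib]
        refine sum_congr rfl fun j _ => ?_
        rw [mul_sum, ← sum_add_distrib, ← sum_sub_distrib]
        exact sum_congr rfl fun k _ => by ring
  have hT : ∀ j ∈ s, ∀ k ∈ s, 0 ≤ T j k := fun j hj k hk => by
    have hj : r j * r j ≤ r j * r' j := mul_le_mul_of_nonneg_left (hrr' j hj) (hr j hj)
    have hk : r k * r k ≤ r k * r' k := mul_le_mul_of_nonneg_left (hrr' k hk) (hr k hk)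
    exact mul_nonneg (mul_nonneg (hw j ‹_›) (hw k ‹_›)) (by nlinarith [sq_nonneg (r j - r k)])
  have hdiag : T i i ≤ ∑ j ∈ s, ∑ k ∈ s, T j k :=
    (single_le_sum (hT i hi) hi).trans
      (single_le_sum (fun j hj => sum_nonneg (hT j hj)) hi)
  linarith

theorem sq_mul_le_det_binaryForm {w r : ℕ → ℝ} {m : ℕ} (hw : ∀ j ≤ m, 0 ≤ w j)
    (hr : ∀ j ≤ m, 0 ≤ r j) (hmono : ∀ j ≤ m, r j ≤ r (j + 1)) {x y : ℝ} (hx : 0 ≤ x)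
    (hy : 0 ≤ y) {i : ℕ} (hi : i ≤ m) :
    (x ^ i * y ^ (m - i)) ^ 2 * (w i ^ 2 * r i * (r (i + 1) - r i)) ≤
      binaryForm (fun j => w j * r j * r (j + 1)) m x y * binaryForm w m x y -
        binaryForm (fun j => w j * r j) m x y ^ 2 := by
  have hmem : ∀ {j}, j ∈ range (m + 1) → j ≤ m := fun hj => Nat.le_of_lt_succ (mem_range.1 hj)
  have key := sq_mul_mul_sub_le_sum_mul_sum_sub_sq (w := fun j => w j * x ^ j * y ^ (m - j))
    (r' := fun j => r (j + 1)) (fun j hj => by have := hw j (hmem hj); positivity)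
    (fun j hj => hr j (hmem hj)) (fun j hj => hmono j (hmem hj))
    (mem_range.2 (Nat.lt_succ_of_le hi))
  have e1 : binaryForm (fun j => w j * r j * r (j + 1)) m x y =
      ∑ j ∈ range (m + 1), w j * x ^ j * y ^ (m - j) * r j * r (j + 1) :=
    sum_congr rfl fun _ _ => by ring
  have e2 : binaryForm (fun j => w j * r j) m x y =
      ∑ j ∈ range (m + 1), w j * x ^ j * y ^ (m - j) * r j :=
    sum_congr rfl fun _ _ => by ring
  rw [e1, e2]
  exact (le_of_eq (by ring)).trans key

noncomputable def ajnRatio (a b c d : ℝ) (n k : ℕ) : ℝ :=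
  (a * k + c * ((n : ℝ) - k - 1)) / (b * k + d * ((n : ℝ) - k - 1))

theorem cast_choose_succ_mul (n j : ℕ) :
    (n.choose (j + 1) : ℝ) * (j + 1) = n.choose j * ((n : ℝ) - j) := by
  rcases le_or_gt j n with h | h
  · have := congrArg (Nat.cast : ℕ → ℝ) (Nat.choose_succ_right_eq n j)
    push_cast [Nat.cast_sub h] at this
    exact this
  · simp [Nat.choose_eq_zero_of_lt h, Nat.choose_eq_zero_of_lt (h.trans (Nat.lt_succ_self j))]

theorem ajn_eq_choose_mul_prod (a b c d : ℝ) (n j : ℕ) :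
    ajn a b c d n j = n.choose j * ∏ k ∈ range j, ajnRatio a b c d n k :=
  rfl

theorem ajn_succ_mul (a b c d : ℝ) (n j : ℕ) :
    ajn a b c d n (j + 1) * (j + 1) = ((n : ℝ) - j) * ajnRatio a b c d n j * ajn a b c d n j := by
  rw [ajn_eq_choose_mul_prod, ajn_eq_choose_mul_prod, prod_range_succ]
  linear_combination (∏ k ∈ range j, ajnRatio a b c d n k) * ajnRatio a b c d n j *
    cast_choose_succ_mul n j

theorem mul_add_mul_pos {α β s t : ℝ} (hα : 0 < α) (hβ : 0 < β) (hs : 0 ≤ s) (ht : 0 ≤ t)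
    (hst : 0 < s + t) : 0 < α * s + β * t := by
  nlinarith [min_le_left α β, min_le_right α β, lt_min hα hβ]

section coefficients

variable {a b c d : ℝ}

theorem ajnRatio_pos (ha : 0 < a) (hb : 0 < b) (hc : 0 < c) (hd : 0 < d) {n j : ℕ}
    (hn : 2 ≤ n) (hj : j < n) : 0 < ajnRatio a b c d n j := by
  have hj' : (j : ℝ) + 1 ≤ n := by exact_mod_cast hj
  have hn' : (2 : ℝ) ≤ n := by exact_mod_cast hn
  have hpos : ∀ {α β : ℝ}, 0 < α → 0 < β → 0 < α * j + β * ((n : ℝ) - j - 1) := fun hα hβ =>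
    mul_add_mul_pos hα hβ (Nat.cast_nonneg j) (by linarith) (by linarith)
  exact div_pos (hpos ha hc) (hpos hb hd)

theorem ajnRatio_lt_ajnRatio_succ (hb : 0 < b) (hd : 0 < d) (habcd : b * c < a * d) {n j : ℕ}
    (hj : j + 2 ≤ n) : ajnRatio a b c d n j < ajnRatio a b c d n (j + 1) := by
  have hj' : (j : ℝ) + 2 ≤ n := by exact_mod_cast hj
  have hden : ∀ {k : ℕ}, (k : ℝ) + 1 ≤ n → 0 < b * k + d * ((n : ℝ) - k - 1) := fun hk =>
    mul_add_mul_pos hb hd (Nat.cast_nonneg _) (by linarith) (by linarith)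
  rw [ajnRatio, ajnRatio, div_lt_div_iff₀ (hden (by linarith)) (hden (by push_cast; linarith))]
  -- `k ↦ (a k + c (n - 1 - k)) / (b k + d (n - 1 - k))` is a Möbius map of determinant
  -- `(n - 1) (a d - b c) > 0`, hence increasing.
  have hgap : 0 < ((n : ℝ) - 1) * (a * d - b * c) := mul_pos (by linarith) (by linarith)
  push_cast
  linear_combination hgap

theorem ajn_pos (ha : 0 < a) (hb : 0 < b) (hc : 0 < c) (hd : 0 < d) {n j : ℕ} (hn : 2 ≤ n)
    (hj : j ≤ n) : 0 < ajn a b c d n j := by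
  rw [ajn_eq_choose_mul_prod]
  exact mul_pos (Nat.cast_pos.2 (Nat.choose_pos hj))
    (prod_pos fun k hk => ajnRatio_pos ha hb hc hd hn ((mem_range.1 hk).trans_le hj))

end coefficients

noncomputable def phiYYCoeff (a b c d : ℝ) (m j : ℕ) : ℝ :=
  ((m : ℝ) + 2 - j) * ((m : ℝ) + 1 - j) * ajn a b c d (m + 2) j

section hessian

variable {a b c d : ℝ} {m : ℕ}

theorem phi_xy_coeff_eq (j : ℕ) :
    ((j : ℝ) + 1) * ((m : ℝ) + 1 - j) * ajn a b c d (m + 2) (j + 1) =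
      phiYYCoeff a b c d m j * ajnRatio a b c d (m + 2) j := by
  have h := ajn_succ_mul a b c d (m + 2) j
  push_cast at h
  rw [phiYYCoeff]
  linear_combination ((m : ℝ) + 1 - j) * h

theorem phi_xx_coeff_eq (j : ℕ) :
    ((j : ℝ) + 2) * ((j : ℝ) + 1) * ajn a b c d (m + 2) (j + 2) =
      phiYYCoeff a b c d m j * ajnRatio a b c d (m + 2) j * ajnRatio a b c d (m + 2) (j + 1) := by
  have h := ajn_succ_mul a b c d (m + 2) (j + 1)
  push_cast at h
  linear_combination
    ((j : ℝ) + 1) * h + ajnRatio a b c d (m + 2) (j + 1) * phi_xy_coeff_eq (m := m) j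

theorem det_Hess_Phi (x y : ℝ) :
    (Hess (Phi a b c d (m + 2)) x y).det =
      binaryForm (fun j => phiYYCoeff a b c d m j * ajnRatio a b c d (m + 2) j *
          ajnRatio a b c d (m + 2) (j + 1)) m x y * binaryForm (phiYYCoeff a b c d m) m x y -
        binaryForm (fun j => phiYYCoeff a b c d m j * ajnRatio a b c d (m + 2) j) m x y ^ 2 := by
  rw [Phi_eq_binaryForm, det_Hess_binaryForm]
  simp only [phi_xx_coeff_eq, phi_xy_coeff_eq]
  rfl

theorem mul_Ajk_self_eq (j : ℕ) :
    ((j : ℝ) + 1) * ((m : ℝ) + 1 - j) * Ajk a b c d (m + 2) j j =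
      phiYYCoeff a b c d m j ^ 2 * ajnRatio a b c d (m + 2) j *
        (ajnRatio a b c d (m + 2) (j + 1) - ajnRatio a b c d (m + 2) j) := by
  have hU := phi_xx_coeff_eq (a := a) (b := b) (c := c) (d := d) (m := m) j
  have hV := phi_xy_coeff_eq (a := a) (b := b) (c := c) (d := d) (m := m) j
  rw [phiYYCoeff] at hU hV ⊢
  rw [Ajk]
  push_cast
  linear_combination ((m : ℝ) + 2 - j) * ((m : ℝ) + 1 - j) * ajn a b c d (m + 2) j * hU -
    ((j : ℝ) + 1) * ((m : ℝ) + 1 - j) * ajn a b c d (m + 2) (j + 1) * hV -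
    ((m : ℝ) + 2 - j) * ((m : ℝ) + 1 - j) * ajn a b c d (m + 2) j * ajnRatio a b c d (m + 2) j * hV

theorem phiYYCoeff_pos (ha : 0 < a) (hb : 0 < b) (hc : 0 < c) (hd : 0 < d) {j : ℕ}
    (hj : j ≤ m) : 0 < phiYYCoeff a b c d m j := by
  have hj' : (j : ℝ) ≤ m := by exact_mod_cast hj
  have := ajn_pos ha hb hc hd (by omega : 2 ≤ m + 2) (by omega : j ≤ m + 2)
  rw [phiYYCoeff]
  exact mul_pos (mul_pos (by linarith) (by linarith)) this

theorem Ajk_self_pos (ha : 0 < a) (hb : 0 < b) (hc : 0 < c) (hd : 0 < d)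
    (habcd : b * c < a * d) {j : ℕ} (hj : j ≤ m) :
    0 < Ajk a b c d (m + 2) j j := by
  have hj' : (j : ℝ) ≤ m := by exact_mod_cast hj
  have hW := phiYYCoeff_pos ha hb hc hd hj
  have hr := ajnRatio_pos ha hb hc hd (by omega : 2 ≤ m + 2) (by omega : j < m + 2)
  have hmono := ajnRatio_lt_ajnRatio_succ hb hd habcd (by omega : j + 2 ≤ m + 2)
  have hprod := mul_Ajk_self_eq (a := a) (b := b) (c := c) (d := d) (m := m) j
  have hfac : 0 < ((j : ℝ) + 1) * ((m : ℝ) + 1 - j) := mul_pos (by positivity) (by linarith)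
  refine (mul_pos_iff_of_pos_left hfac).1 (hprod ▸ ?_)
  have := sub_pos.2 hmono
  positivity

end hessian

/-- Lower bound for twice the determinant of the Hessian of `Φ_n`. -/
theorem det_Hess_lower_bound (a b c d : ℝ) (ha : 0 < a) (hb : 0 < b) (hc : 0 < c)
    (hd : 0 < d) (habcd : b * c < a * d) (n : ℕ) (hn : 2 ≤ n) :
    0 < Ajk a b c d n 0 0 ∧ 0 < Ajk a b c d n (n - 2) (n - 2) ∧
    ∀ x y : ℝ, 0 ≤ x → 0 ≤ y →
      ((n : ℝ) - 1) * Ajk a b c d n (n - 2) (n - 2) * x ^ (2 * n - 4) +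
          ((n : ℝ) - 1) * Ajk a b c d n 0 0 * y ^ (2 * n - 4) ≤
        2 * (Hess (Phi a b c d n) x y).det := by
  obtain ⟨m, rfl⟩ : ∃ m, n = m + 2 := ⟨n - 2, by omega⟩
  rw [Nat.add_sub_cancel, show 2 * (m + 2) - 4 = 2 * m by omega]
  refine ⟨Ajk_self_pos ha hb hc hd habcd m.zero_le, Ajk_self_pos ha hb hc hd habcd le_rfl,
    fun x y hx hy => ?_⟩
  have hW j (hj : j ≤ m) := (phiYYCoeff_pos ha hb hc hd hj).le
  have hr j (hj : j ≤ m) :=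
    (ajnRatio_pos ha hb hc hd (by omega : 2 ≤ m + 2) (by omega : j < m + 2)).le
  have hmono j (hj : j ≤ m) :=
    (ajnRatio_lt_ajnRatio_succ hb hd habcd (by omega : j + 2 ≤ m + 2)).le
  have h0 := sq_mul_le_det_binaryForm hW hr hmono hx hy m.zero_le
  have hm := sq_mul_le_det_binaryForm hW hr hmono hx hy le_rfl
  rw [← mul_Ajk_self_eq] at h0 hm
  rw [det_Hess_Phi]
  simp only [pow_zero, tsub_zero, one_mul, CharP.cast_eq_zero, zero_add, tsub_self,
    mul_one, add_sub_cancel_left] at h0 hm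
  push_cast
  rw [pow_mul]
  linear_combination h0 + hm
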